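/- Let λ ∈ ℂ with λ ≠ 0. For d1, d2 ∈ ℕ define c d1 d2 = (1/((2d1+1)!·(2d2+1)!)) · iteratedDeriv (2d2+1) (fun u2 : ℂ => iteratedDeriv (2d1+1) (fun u1 : ℂ => u1^3 * u2 * (-u1 - u2)^((2*(d1:ℤ)+2*(d2:ℤ)-2)) ) λ) λ, the iterated residue at (u1,u2)=(λ,λ) of u1^3u2(-u1-u2)^{2(d1+d2-1)}/((u1-λ)^{2(d1+1)}(u2-λ)^{2(d2+1)}). Then for all z1, z2 ∈ ℂ with |z1| < 1/100 and |z2| < 1/100, HasSum (fun p : ℕ × ℕ => z1^p.1 * z2^p.2 * c p.1 p.2) (((1-z2)^2 + z1*(6 - 7*z1 - 10*z2)) / (8*(1 - 2*(z1+z2) + (z1-z2)^2))). -/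

import Mathlib

/-!
The integrand `u₁³ u₂ (u₁ + u₂)^m`, `m = 2(d₁ + d₂) - 2`, is homogeneous of degree
`(2d₁ + 1) + (2d₂ + 1)`. For `d₁ + d₂ ≥ 1` it is a polynomial, so its mixed derivative of that
order is constant: `(2d₁ + 1)! (2d₂ + 1)!` times the coefficient `C(m, 2d₂)` of
`u₁^(2d₁+1) u₂^(2d₂+1)`. For `d₁ = d₂ = 0` (where `m = -2`) a direct computation gives `1/8`.

With `z₁ = w₁²`, `z₂ = w₂²`, the even part of the binomial expansion shows that the `(n+1)`-st
antidiagonal of the series is `z₁ ((w₁ + w₂)^(2n) + (w₁ - w₂)^(2n)) / 2`. So the series is `1/8`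
plus two geometric series with ratios `(w₁ ± w₂)²`, and `(1 - (w₁ + w₂)²) (1 - (w₁ - w₂)²)` is
the discriminant `1 - 2(z₁ + z₂) + (z₁ - z₂)²`.
-/

open Finset
open scoped Nat

noncomputable def yukawaCoeff (d₁ d₂ : ℕ) : ℂ :=
  if d₁ = 0 ∧ d₂ = 0 then 1 / 8 else ((2 * (d₁ + d₂) - 2).choose (2 * d₂) : ℂ)

theorem Nat.descFactorial_mul_descFactorial_of_add_eq {a b m n : ℕ} (h : a + b = m + n) :
    a.descFactorial m * b.descFactorial n = if a = m then m ! * n ! else 0 := by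
  split_ifs with ha
  · obtain rfl : b = n := by omega
    subst ha
    rw [Nat.descFactorial_self, Nat.descFactorial_self]
  · rcases Nat.lt_or_gt_of_ne ha with ha | ha
    · rw [Nat.descFactorial_eq_zero_iff_lt.mpr ha, zero_mul]
    · rw [Nat.descFactorial_eq_zero_iff_lt.mpr (by omega : b < n), mul_zero]

theorem pow_mul_pow_mul_add_pow_eq_sum {R : Type*} [CommSemiring R] (a b M : ℕ) (u₁ u₂ : R) :
    u₁ ^ a * u₂ ^ b * (u₂ + u₁) ^ M
      = ∑ j ∈ range (M + 1), (M.choose j * u₂ ^ (b + j)) * u₁ ^ (a + M - j) := by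
  rw [add_pow, mul_sum]
  refine sum_congr rfl fun j hmem => ?_
  have hj : j ≤ M := Nat.lt_succ_iff.mp (mem_range.mp hmem)
  rw [show a + M - j = a + (M - j) by omega, pow_add, pow_add]
  ring

section

variable {𝕜 : Type*} [NontriviallyNormedField 𝕜]

theorem iteratedDeriv_sum_mul_pow {ι : Type*} (s : Finset ι) (c : ι → 𝕜) (p : ι → ℕ)
    (n : ℕ) (x : 𝕜) :
    iteratedDeriv n (fun y => ∑ k ∈ s, c k * y ^ p k) x
      = ∑ k ∈ s, c k * ((p k).descFactorial n * x ^ (p k - n)) := by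
  rw [iteratedDeriv_fun_sum fun k _ => by fun_prop]
  simp only [iteratedDeriv_const_mul_field, iteratedDeriv_pow]

theorem iteratedDeriv_iteratedDeriv_pow_mul_pow_mul_add_pow (a b M k N : ℕ)
    (h : a + M = N + k) (x y : 𝕜) :
    iteratedDeriv (k + b) (fun u₂ =>
        iteratedDeriv N (fun u₁ => u₁ ^ a * u₂ ^ b * (u₂ + u₁) ^ M) x) y
      = N ! * (k + b)! * M.choose k := by
  simp_rw [pow_mul_pow_mul_add_pow_eq_sum, iteratedDeriv_sum_mul_pow]
  have regroup : (fun u₂ : 𝕜 => ∑ j ∈ range (M + 1), (M.choose j * u₂ ^ (b + j)) *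
        ((a + M - j).descFactorial N * x ^ (a + M - j - N)))
      = fun u₂ => ∑ j ∈ range (M + 1),
          (M.choose j * (a + M - j).descFactorial N * x ^ (a + M - j - N)) * u₂ ^ (b + j) := by
    funext u₂
    exact sum_congr rfl fun j _ => by ring
  rw [regroup, iteratedDeriv_sum_mul_pow]
  -- the two exponents add up to `N + (k + b)`, so only `j = k` survives
  have term : ∀ j ∈ range (M + 1),
      (M.choose j * (a + M - j).descFactorial N * x ^ (a + M - j - N) : 𝕜)
          * ((b + j).descFactorial (k + b) * y ^ (b + j - (k + b)))
        = if k = j then (N ! * (k + b)! * M.choose k : 𝕜) else 0 := by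
    intro j hmem
    have hj : j ≤ M := Nat.lt_succ_iff.mp (mem_range.mp hmem)
    have hdesc := congrArg (Nat.cast (R := 𝕜)) (Nat.descFactorial_mul_descFactorial_of_add_eq
      (show (b + j) + (a + M - j) = (k + b) + N by omega))
    split_ifs with hkj
    · subst hkj
      rw [if_pos (add_comm b k)] at hdesc
      push_cast at hdesc
      rw [show a + M - k - N = 0 by omega, show b + k - (k + b) = 0 by omega]
      linear_combination (M.choose k : 𝕜) * hdesc
    · rw [if_neg (by omega)] at hdesc
      push_cast at hdesc
      linear_combination (M.choose j * x ^ (a + M - j - N) * y ^ (b + j - (k + b)) : 𝕜) * hdesc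
  rw [sum_congr rfl term, sum_ite_eq]
  split_ifs with hk
  · rfl
  · rw [Nat.choose_eq_zero_of_lt (by simpa using hk)]
    simp

theorem deriv_deriv_cube_mul_div_add_sq [CharZero 𝕜] {x : 𝕜} (hx : x ≠ 0) :
    deriv (fun u₂ => deriv (fun u₁ => u₁ ^ 3 * u₂ / (u₁ + u₂) ^ 2) x) x = 1 / 8 := by
  have inner : ∀ u₂, x + u₂ ≠ 0 →
      deriv (fun u₁ => u₁ ^ 3 * u₂ / (u₁ + u₂) ^ 2) x
        = x ^ 2 * u₂ * (x + 3 * u₂) / (x + u₂) ^ 3 := by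
    intro u₂ hu₂
    rw [(((hasDerivAt_pow 3 x).mul_const u₂).fun_div
      (((hasDerivAt_id' x).add_const u₂).fun_pow 2) (pow_ne_zero 2 hu₂)).deriv]
    field_simp
    ring
  have h2x : x + x ≠ 0 := by rw [← two_mul]; exact mul_ne_zero two_ne_zero hx
  have near : (fun u₂ => deriv (fun u₁ => u₁ ^ 3 * u₂ / (u₁ + u₂) ^ 2) x)
      =ᶠ[nhds x] fun u₂ => x ^ 2 * u₂ * (x + 3 * u₂) / (x + u₂) ^ 3 :=
    Filter.eventually_of_mem ((isOpen_ne_fun (continuous_const.add continuous_id)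
      continuous_const).mem_nhds h2x) inner
  rw [near.deriv_eq, ((((hasDerivAt_id' x).const_mul (x ^ 2)).fun_mul
    ((hasDerivAt_id' x).const_mul 3 |>.const_add x)).fun_div
    (((hasDerivAt_id' x).const_add x).fun_pow 3) (pow_ne_zero 3 h2x)).deriv]
  field_simp
  ring

end

theorem residue_eq_yukawaCoeff {Λ : ℂ} (hΛ : Λ ≠ 0) (d1 d2 : ℕ) :
    (1 / (((2*d1+1)! : ℂ) * ((2*d2+1)! : ℂ))) *
      iteratedDeriv (2*d2+1) (fun u2 : ℂ =>
        iteratedDeriv (2*d1+1) (fun u1 : ℂ =>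
          u1^3 * u2 * ((-u1 - u2)^(2*(d1:ℤ)+2*(d2:ℤ)-2))) Λ) Λ = yukawaCoeff d1 d2 := by
  by_cases h0 : d1 = 0 ∧ d2 = 0
  · obtain ⟨rfl, rfl⟩ := h0
    have hsimp : ∀ u1 u2 : ℂ, u1 ^ 3 * u2 * (-u1 - u2) ^ (2 * ((0 : ℕ) : ℤ) + 2 * ((0 : ℕ) : ℤ) - 2)
        = u1 ^ 3 * u2 / (u1 + u2) ^ 2 := by
      intro u1 u2
      rw [show -u1 - u2 = -(u1 + u2) by ring,
        show 2 * ((0 : ℕ) : ℤ) + 2 * ((0 : ℕ) : ℤ) - 2 = -2 by rfl,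
        zpow_neg, even_two.neg_zpow, zpow_ofNat, div_eq_mul_inv]
    simp only [hsimp, yukawaCoeff, Nat.mul_zero, zero_add, Nat.factorial_one, iteratedDeriv_one]
    rw [deriv_deriv_cube_mul_div_add_sq hΛ]
    norm_num
  · set M := 2 * (d1 + d2) - 2
    have hM : 2 * (d1 : ℤ) + 2 * (d2 : ℤ) - 2 = (M : ℤ) := by omega
    have hpow : ∀ u1 u2 : ℂ, u1 ^ 3 * u2 * (-u1 - u2) ^ (2 * (d1 : ℤ) + 2 * (d2 : ℤ) - 2)
        = u1 ^ 3 * u2 ^ 1 * (u2 + u1) ^ M := by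
      intro u1 u2
      rw [hM, zpow_natCast, show -u1 - u2 = -(u2 + u1) by ring, pow_one,
        Even.neg_pow ⟨d1 + d2 - 1, by omega⟩]
    simp only [hpow]
    rw [iteratedDeriv_iteratedDeriv_pow_mul_pow_mul_add_pow 3 1 M (2 * d2) (2 * d1 + 1) (by omega),
      yukawaCoeff, if_neg h0, one_div, inv_mul_cancel_left₀ (by simp [Nat.factorial_ne_zero])]

theorem Finset.sum_range_two_mul_add_one {M : Type*} [AddCommMonoid M] (f : ℕ → M) (n : ℕ) :
    ∑ k ∈ range (2 * n + 1), f k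
      = ∑ i ∈ range (n + 1), f (2 * i) + ∑ i ∈ range n, f (2 * i + 1) := by
  induction n with
  | zero => simp
  | succ n ih =>
    rw [show 2 * (n + 1) + 1 = 2 * n + 1 + 1 + 1 by ring, sum_range_succ, sum_range_succ, ih,
      sum_range_succ (fun i => f (2 * i)) (n + 1), sum_range_succ (fun i => f (2 * i + 1)) n,
      show 2 * n + 1 + 1 = 2 * (n + 1) by ring]
    abel

theorem add_pow_two_mul_add_neg_add_pow_two_mul {R : Type*} [CommRing R] (x y : R) (n : ℕ) :
    (x + y) ^ (2 * n) + (-x + y) ^ (2 * n)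
      = 2 * ∑ p ∈ antidiagonal n,
          ((2 * n).choose (2 * p.1) : R) * (x ^ 2) ^ p.1 * (y ^ 2) ^ p.2 := by
  rw [add_pow, add_pow, ← sum_add_distrib, sum_range_two_mul_add_one,
    Nat.sum_antidiagonal_eq_sum_range_succ_mk, mul_sum]
  have odd : ∀ i ∈ range n,
      x ^ (2 * i + 1) * y ^ (2 * n - (2 * i + 1)) * ((2 * n).choose (2 * i + 1))
      + (-x) ^ (2 * i + 1) * y ^ (2 * n - (2 * i + 1)) * ((2 * n).choose (2 * i + 1)) = 0 := by
    intro i _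
    rw [Odd.neg_pow ⟨i, rfl⟩]
    ring
  rw [sum_eq_zero odd, add_zero]
  refine sum_congr rfl fun i hi => ?_
  rw [Even.neg_pow ⟨i, two_mul i⟩, ← pow_mul, ← pow_mul, show 2 * (n - i) = 2 * n - 2 * i by omega]
  ring

theorem yukawaCoeff_zero_succ (n : ℕ) : yukawaCoeff 0 (n + 1) = 0 := by
  rw [yukawaCoeff, if_neg (by omega), Nat.choose_eq_zero_of_lt (by omega), Nat.cast_zero]

theorem yukawaCoeff_succ_left (k l : ℕ) : yukawaCoeff (k + 1) l = (2 * (k + l)).choose (2 * k) := by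
  rw [yukawaCoeff, if_neg (by omega), show 2 * (k + 1 + l) - 2 = 2 * k + 2 * l by omega,
    mul_add, Nat.choose_symm_add]

theorem two_mul_sum_antidiagonal_succ_yukawaCoeff (w₁ w₂ : ℂ) (n : ℕ) :
    2 * ∑ p ∈ antidiagonal (n + 1), (w₁ ^ 2) ^ p.1 * (w₂ ^ 2) ^ p.2 * yukawaCoeff p.1 p.2
      = w₁ ^ 2 * (((w₁ + w₂) ^ 2) ^ n + ((-w₁ + w₂) ^ 2) ^ n) := by
  rw [Nat.sum_antidiagonal_succ, yukawaCoeff_zero_succ, mul_zero, zero_add, ← pow_mul, ← pow_mul,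
    add_pow_two_mul_add_neg_add_pow_two_mul, mul_sum, mul_sum, mul_sum]
  refine sum_congr rfl fun p hp => ?_
  rw [yukawaCoeff_succ_left, mem_antidiagonal.mp hp]
  ring

theorem HasSum.of_sum_antidiagonal {α : Type*} [AddCommMonoid α] [TopologicalSpace α]
    [ContinuousAdd α] [T3Space α] {f : ℕ × ℕ → α} {a : α} (hf : Summable f)
    (h : HasSum (fun n => ∑ p ∈ antidiagonal n, f p) a) : HasSum f a := by
  rw [← (HasAntidiagonal.sigmaAntidiagonalEquivProd (A := ℕ)).hasSum_iff]
  exact h.sigma_of_hasSum (fun n => Finset.hasSum _ _)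
    ((HasAntidiagonal.sigmaAntidiagonalEquivProd (A := ℕ)).summable_iff.mpr hf)

theorem norm_yukawaCoeff_le (a b : ℕ) : ‖yukawaCoeff a b‖ ≤ 4 ^ (a + b) := by
  rw [yukawaCoeff]
  split_ifs
  · calc ‖(1 / 8 : ℂ)‖ ≤ 1 := by norm_num
      _ ≤ 4 ^ (a + b) := one_le_pow₀ (by norm_num)
  · rw [Complex.norm_natCast]
    calc ((2 * (a + b) - 2).choose (2 * b) : ℝ) ≤ 2 ^ (2 * (a + b) - 2) :=
          mod_cast Nat.choose_le_two_pow _ _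
      _ ≤ 2 ^ (2 * (a + b)) := pow_le_pow_right₀ (by norm_num) (by omega)
      _ = 4 ^ (a + b) := by rw [pow_mul]; norm_num

theorem summable_yukawaCoeff {z₁ z₂ : ℂ} (h₁ : ‖z₁‖ < 1 / 4) (h₂ : ‖z₂‖ < 1 / 4) :
    Summable fun p : ℕ × ℕ => z₁ ^ p.1 * z₂ ^ p.2 * yukawaCoeff p.1 p.2 := by
  refine Summable.of_norm_bounded (g := fun p : ℕ × ℕ => (4 * ‖z₁‖) ^ p.1 * (4 * ‖z₂‖) ^ p.2)
    ((summable_geometric_of_lt_one (by positivity) (by linarith)).mul_of_nonneg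
      (summable_geometric_of_lt_one (by positivity) (by linarith))
      (fun _ => by positivity) (fun _ => by positivity)) fun p => ?_
  rw [norm_mul, norm_mul, norm_pow, norm_pow, mul_pow, mul_pow]
  calc ‖z₁‖ ^ p.1 * ‖z₂‖ ^ p.2 * ‖yukawaCoeff p.1 p.2‖
      ≤ ‖z₁‖ ^ p.1 * ‖z₂‖ ^ p.2 * 4 ^ (p.1 + p.2) := by
        gcongr; exact norm_yukawaCoeff_le _ _
    _ = _ := by ring

theorem hasSum_sum_antidiagonal_yukawaCoeff {z₁ z₂ : ℂ} (h₁ : ‖z₁‖ < 1 / 4) (h₂ : ‖z₂‖ < 1 / 4) :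
    HasSum (fun n => ∑ p ∈ antidiagonal n, z₁ ^ p.1 * z₂ ^ p.2 * yukawaCoeff p.1 p.2)
      (((1 - z₂) ^ 2 + z₁ * (6 - 7 * z₁ - 10 * z₂)) /
        (8 * (1 - 2 * (z₁ + z₂) + (z₁ - z₂) ^ 2))) := by
  obtain ⟨w₁, rfl⟩ := IsAlgClosed.exists_pow_nat_eq z₁ two_pos
  obtain ⟨w₂, rfl⟩ := IsAlgClosed.exists_pow_nat_eq z₂ two_pos
  have hw : ‖w₁‖ + ‖w₂‖ < 1 := by
    rw [norm_pow, show (1 / 4 : ℝ) = (1 / 2) ^ 2 by norm_num] at h₁ h₂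
    linarith [lt_of_pow_lt_pow_left₀ 2 (by norm_num) h₁, lt_of_pow_lt_pow_left₀ 2 (by norm_num) h₂]
  have hα : ‖(w₁ + w₂) ^ 2‖ < 1 := by
    rw [norm_pow]
    exact pow_lt_one₀ (norm_nonneg _) ((norm_add_le _ _).trans_lt hw) two_ne_zero
  have hβ : ‖(-w₁ + w₂) ^ 2‖ < 1 := by
    rw [norm_pow]
    exact pow_lt_one₀ (norm_nonneg _)
      ((norm_add_le _ _).trans_lt (by rwa [norm_neg])) two_ne_zero
  have hα₁ : 1 - (w₁ + w₂) ^ 2 ≠ 0 := fun h => by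
    rw [← sub_eq_zero.mp h, norm_one] at hα; exact lt_irrefl _ hα
  have hβ₁ : 1 - (-w₁ + w₂) ^ 2 ≠ 0 := fun h => by
    rw [← sub_eq_zero.mp h, norm_one] at hβ; exact lt_irrefl _ hβ
  set A : ℕ → ℂ := fun n =>
    ∑ p ∈ antidiagonal n, (w₁ ^ 2) ^ p.1 * (w₂ ^ 2) ^ p.2 * yukawaCoeff p.1 p.2
  have h0 : A 0 = 1 / 8 := by simp [A, yukawaCoeff]
  have tail : HasSum (fun n => A (n + 1))
      (w₁ ^ 2 / 2 * ((1 - (w₁ + w₂) ^ 2)⁻¹ + (1 - (-w₁ + w₂) ^ 2)⁻¹)) := by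
    have diag : ∀ n, A (n + 1) = w₁ ^ 2 / 2 * (((w₁ + w₂) ^ 2) ^ n + ((-w₁ + w₂) ^ 2) ^ n) :=
      fun n => by linear_combination two_mul_sum_antidiagonal_succ_yukawaCoeff w₁ w₂ n / 2
    simpa only [diag] using ((hasSum_geometric_of_norm_lt_one hα).add
      (hasSum_geometric_of_norm_lt_one hβ)).mul_left (w₁ ^ 2 / 2)
  have hΔ : 1 - 2 * (w₁ ^ 2 + w₂ ^ 2) + (w₁ ^ 2 - w₂ ^ 2) ^ 2
      = (1 - (w₁ + w₂) ^ 2) * (1 - (-w₁ + w₂) ^ 2) := by ring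
  have hval : ((1 - w₂ ^ 2) ^ 2 + w₁ ^ 2 * (6 - 7 * w₁ ^ 2 - 10 * w₂ ^ 2)) /
      (8 * (1 - 2 * (w₁ ^ 2 + w₂ ^ 2) + (w₁ ^ 2 - w₂ ^ 2) ^ 2))
      = 1 / 8 + w₁ ^ 2 / 2 * ((1 - (w₁ + w₂) ^ 2)⁻¹ + (1 - (-w₁ + w₂) ^ 2)⁻¹) := by
    rw [hΔ]
    field_simp
    ring
  rw [hval, ← h0]
  exact tail.zero_add

theorem hasSum_yukawaCoeff {z₁ z₂ : ℂ} (h₁ : ‖z₁‖ < 1 / 4) (h₂ : ‖z₂‖ < 1 / 4) :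
    HasSum (fun p : ℕ × ℕ => z₁ ^ p.1 * z₂ ^ p.2 * yukawaCoeff p.1 p.2)
      (((1 - z₂) ^ 2 + z₁ * (6 - 7 * z₁ - 10 * z₂)) /
        (8 * (1 - 2 * (z₁ + z₂) + (z₁ - z₂) ^ 2))) :=
  .of_sum_antidiagonal (summable_yukawaCoeff h₁ h₂) (hasSum_sum_antidiagonal_yukawaCoeff h₁ h₂)

theorem stmt15 (Λ : ℂ) (hΛ : Λ ≠ 0) (c : ℕ → ℕ → ℂ)
    (hc : ∀ d1 d2 : ℕ, c d1 d2 =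
      (1 / (((2*d1+1)! : ℂ) * ((2*d2+1)! : ℂ))) *
      iteratedDeriv (2*d2+1) (fun u2 : ℂ =>
        iteratedDeriv (2*d1+1) (fun u1 : ℂ =>
          u1^3 * u2 * ((-u1 - u2)^(2*(d1:ℤ)+2*(d2:ℤ)-2))) Λ) Λ) :
    ∀ z1 z2 : ℂ, ‖z1‖ < 1/100 → ‖z2‖ < 1/100 →
      HasSum (fun p : ℕ × ℕ => z1^p.1 * z2^p.2 * c p.1 p.2)
        (((1-z2)^2 + z1*(6 - 7*z1 - 10*z2)) / (8*(1 - 2*(z1+z2) + (z1-z2)^2))) := by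
  intro z1 z2 h1 h2
  obtain rfl : c = yukawaCoeff :=
    funext₂ fun d1 d2 => (hc d1 d2).trans (residue_eq_yukawaCoeff hΛ d1 d2)
  exact hasSum_yukawaCoeff (h1.trans (by norm_num)) (h2.trans (by norm_num))
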